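/- Let d ≥ 2 and let p : {1,...,2^{d-1}+3} → ℝ^d be the configuration of the previous statement. The point q₂ = (-21/20,9/10,0,...,0) is the reflection of p₂ = (-1/4,1/2,0,...,0) in the affine hyperplane of ℝ^d spanned by the points p₁, p₄, p₆, ..., p_{2^{d-1}+2}, and q₃ = (1/4,1/2,0,...,0) is the reflection of p₃ = (21/20,9/10,0,...,0) in the affine hyperplane spanned by p₁, p₅, p₇, ..., p_{2^{d-1}+3}. -/

import Mathlib

/-- The point of ℝ^d with first coordinate `a`, second coordinate `b`, and remaining
`d-2` coordinates given by `w`. -/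
noncomputable def vec (d : ℕ) (a b : ℝ) (w : Fin (d-2) → ℝ) : EuclideanSpace ℝ (Fin d) :=
  WithLp.toLp 2 fun (i : Fin d) => if i.1 = 0 then a else if i.1 = 1 then b else
    if h : i.1 - 2 < d - 2 then w ⟨i.1 - 2, h⟩ else 0

/-- Membership in the "hub" vertex set {1, 4, 5, ..., 2^(d-1)+3} (1-based labels). -/
def IsHub (d m : ℕ) : Prop := m = 1 ∨ (4 ≤ m ∧ m ≤ 2^(d-1)+3)

/-- The edge set of the graph G_d on {1, ..., 2^(d-1)+3}: all pairs of hub vertices;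
{1,2} and {2,2k} for 2 ≤ k ≤ 2^(d-2)+1; {1,3} and {3,2k+1} for 2 ≤ k ≤ 2^(d-2)+1;
and {2,3}. -/
def Ed (d : ℕ) : Set (ℕ × ℕ) :=
  {e | (IsHub d e.1 ∧ IsHub d e.2 ∧ e.1 ≠ e.2) ∨ e = (1,2) ∨
    (∃ k, 2 ≤ k ∧ k ≤ 2^(d-2)+1 ∧ e = (2, 2*k)) ∨ e = (1,3) ∨
    (∃ k, 2 ≤ k ∧ k ≤ 2^(d-2)+1 ∧ e = (3, 2*k+1)) ∨ e = (2,3)}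

/-!
Both hyperplanes contain `p₁ = (0, 2, 0)` and the points `(ε, 0, w)` for all vertices `w` of the
cube `{±1}^(d-2)`, with `ε = -1` for the first and `ε = 1` for the second. The vector `(2ε, 1, 0)`
is orthogonal to each difference `(ε, -2, w)`, and `p₂ - q₂`, `p₃ - q₃` are multiples of it. Since
the cube vertices sum to zero, the centroid `(ε, 0, 0)` of the points `(ε, 0, w)` lies in the
hyperplane, and so does the midpoint `(13ε/20, 7/10, 0)`, which divides the segment from `p₁` to
this centroid in the ratio `13 : 7`.
-/

open Finset RealInnerProductSpace

theorem sum_piFinset_signs (ι : Type*) [Fintype ι] [DecidableEq ι] :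
    ∑ x ∈ Fintype.piFinset (fun _ : ι => ({1, -1} : Finset ℝ)), x = 0 := by
  set S := Fintype.piFinset (fun _ : ι => ({1, -1} : Finset ℝ))
  have hneg_mem : ∀ x ∈ S, -x ∈ S := by
    intro x hx
    simp only [S, Fintype.mem_piFinset, mem_insert, mem_singleton] at hx ⊢
    intro i
    rcases hx i with h | h <;> simp [h]
  have h : ∑ x ∈ S, x = ∑ x ∈ S, -x :=
    sum_nbij' Neg.neg Neg.neg hneg_mem hneg_mem (by simp) (by simp) (by simp)
  rwa [sum_neg_distrib, self_eq_neg] at h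

theorem sum_eq_zero_of_injOn_signs {ι κ : Type*} [Fintype κ] [DecidableEq κ] {t : Finset ι}
    {f : ι → κ → ℝ} (hf : ∀ k ∈ t, ∀ i, f k i = 1 ∨ f k i = -1) (hinj : Set.InjOn f t)
    (hcard : #t = 2 ^ Fintype.card κ) : ∑ k ∈ t, f k = 0 := by
  classical
  have hsub : t.image f ⊆ Fintype.piFinset (fun _ : κ => ({1, -1} : Finset ℝ)) := by
    simp only [subset_iff, mem_image, Fintype.mem_piFinset, mem_insert, mem_singleton]
    rintro _ ⟨k, hk, rfl⟩
    exact hf k hk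
  have himage := eq_of_subset_of_card_le hsub (by
    rw [card_image_of_injOn hinj, hcard, Fintype.card_piFinset, card_pair (by norm_num)]
    simp)
  rw [← sum_piFinset_signs κ, ← himage, sum_image hinj]

theorem smul_sum_vsub_vadd_mem_affineSpan {k V P ι : Type*} [Ring k] [AddCommGroup V]
    [Module k V] [AddTorsor V P] {s : Set P} {p₀ : P} (h₀ : p₀ ∈ s) (t : Finset ι) {q : ι → P}
    (hq : ∀ i ∈ t, q i ∈ s) (c : k) : c • ∑ i ∈ t, (q i -ᵥ p₀) +ᵥ p₀ ∈ affineSpan k s := by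
  have h₀' := subset_affineSpan k s h₀
  refine AffineSubspace.vadd_mem_of_mem_direction (Submodule.smul_mem _ _ ?_) h₀'
  exact Submodule.sum_mem _ fun i hi =>
    AffineSubspace.vsub_mem_direction (subset_affineSpan k s (hq i hi)) h₀'

theorem inner_eq_zero_of_mem_direction_affineSpan {V P : Type*} [NormedAddCommGroup V]
    [InnerProductSpace ℝ V] [AddTorsor V P] {s : Set P} {p₀ : P} (h₀ : p₀ ∈ s) {u : V}
    (hu : ∀ x ∈ s, ⟪u, x -ᵥ p₀⟫ = 0) {v : V} (hv : v ∈ (affineSpan ℝ s).direction) :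
    ⟪u, v⟫ = 0 := by
  have hle : (affineSpan ℝ s).direction ≤ (ℝ ∙ u)ᗮ := by
    rw [direction_affineSpan, vectorSpan_eq_span_vsub_set_right ℝ h₀, Submodule.span_le]
    rintro _ ⟨x, hx, rfl⟩
    exact Submodule.mem_orthogonal_singleton_iff_inner_right.2 (hu x hx)
  exact Submodule.mem_orthogonal_singleton_iff_inner_right.1 (hle hv)

section vec

variable {d : ℕ}

theorem vec_zero : vec d 0 0 0 = 0 := by
  ext i
  simp only [vec, Pi.zero_apply, PiLp.zero_apply]
  split_ifs <;> rfl

theorem vec_add (a b a' b' : ℝ) (w w' : Fin (d - 2) → ℝ) :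
    vec d a b w + vec d a' b' w' = vec d (a + a') (b + b') (w + w') := by
  ext i
  simp only [vec, PiLp.add_apply, Pi.add_apply]
  split_ifs <;> simp

theorem vec_smul (c a b : ℝ) (w : Fin (d - 2) → ℝ) :
    c • vec d a b w = vec d (c * a) (c * b) (c • w) := by
  ext i
  simp only [vec, PiLp.smul_apply, Pi.smul_apply, smul_eq_mul]
  split_ifs <;> simp

theorem vec_sub (a b a' b' : ℝ) (w w' : Fin (d - 2) → ℝ) :
    vec d a b w - vec d a' b' w' = vec d (a - a') (b - b') (w - w') := by
  ext i
  simp only [vec, PiLp.sub_apply, Pi.sub_apply]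
  split_ifs <;> simp

theorem vec_sum {ι : Type*} (t : Finset ι) (a b : ι → ℝ) (w : ι → Fin (d - 2) → ℝ) :
    ∑ j ∈ t, vec d (a j) (b j) (w j) = vec d (∑ j ∈ t, a j) (∑ j ∈ t, b j) (∑ j ∈ t, w j) := by
  induction t using Finset.cons_induction with
  | empty => simp [vec_zero]
  | cons j t hj ih => simp [sum_cons, ih, vec_add]

theorem inner_vec_zero_left (hd : 2 ≤ d) (a b a' b' : ℝ) (w : Fin (d - 2) → ℝ) :
    ⟪vec d a b 0, vec d a' b' w⟫ = a * a' + b * b' := by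
  obtain ⟨m, rfl⟩ := Nat.exists_eq_add_of_le' hd
  simp [vec, PiLp.inner_apply, Fin.sum_univ_succ]
  ring

end vec

section hyperplane

variable {d : ℕ} {ε : ℝ} {z : ℕ → Fin (d - 2) → ℝ} {Q : ℕ → EuclideanSpace ℝ (Fin d)}

theorem inner_vec_eq_zero_of_mem_direction_affineSpan (hd : 2 ≤ d) (hε : ε ^ 2 = 1) {N : ℕ}
    (hQ : ∀ j, 2 ≤ j → j ≤ N → Q j = vec d ε 0 (z j)) {v : EuclideanSpace ℝ (Fin d)}
    (hv : v ∈ (affineSpan ℝ ({vec d 0 2 0} ∪ {x | ∃ j, 2 ≤ j ∧ j ≤ N ∧ x = Q j})).direction) :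
    ⟪vec d (2 * ε) 1 0, v⟫ = 0 := by
  refine inner_eq_zero_of_mem_direction_affineSpan (p₀ := vec d 0 2 0) (Or.inl rfl) ?_ hv
  rintro x (rfl | ⟨j, hj₂, hjN, rfl⟩)
  · simp
  · rw [vsub_eq_sub, hQ j hj₂ hjN, vec_sub, inner_vec_zero_left hd]
    linear_combination 2 * hε

theorem vec_mem_affineSpan_of_sum_eq_zero {n : ℕ} (hn : n ≠ 0)
    (hQ : ∀ j, 2 ≤ j → j ≤ n + 1 → Q j = vec d ε 0 (z j)) (hz : ∑ j ∈ Icc 2 (n + 1), z j = 0) :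
    vec d (13 / 20 * ε) (7 / 10) 0 ∈
      affineSpan ℝ ({vec d 0 2 0} ∪ {x | ∃ j, 2 ≤ j ∧ j ≤ n + 1 ∧ x = Q j}) := by
  have hmem := smul_sum_vsub_vadd_mem_affineSpan (k := ℝ)
    (s := {vec d 0 2 0} ∪ {x | ∃ j, 2 ≤ j ∧ j ≤ n + 1 ∧ x = Q j}) (Or.inl rfl) (Icc 2 (n + 1))
    (fun j hj => Or.inr ⟨j, (mem_Icc.1 hj).1, (mem_Icc.1 hj).2, rfl⟩) (13 / (20 * n))
  have hsum : ∑ j ∈ Icc 2 (n + 1), (Q j -ᵥ vec d 0 2 0) = vec d (n * ε) (-2 * n) 0 := by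
    rw [sum_congr rfl fun j hj => by rw [vsub_eq_sub, hQ j (mem_Icc.1 hj).1 (mem_Icc.1 hj).2,
      vec_sub], vec_sum]
    simp [hz, mul_comm]
  rw [hsum, vec_smul, vadd_eq_add, vec_add] at hmem
  have hn' : (n : ℝ) ≠ 0 := Nat.cast_ne_zero.2 hn
  convert hmem using 2
  · field_simp
    ring
  · field_simp
    ring
  · simp

end hyperplane

/-- q₂ is the reflection of p₂ in the affine hyperplane spanned by
p₁, p₄, p₆, ..., p_{2^(d-1)+2}, and q₃ is the reflection of p₃ in the affine
hyperplane spanned by p₁, p₅, p₇, ..., p_{2^(d-1)+3}: in each case the midpoint lies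
in the affine span and the difference vector is orthogonal to its direction. -/
theorem stmt_16 (d : ℕ) (hd : 2 ≤ d)
    (w : ℕ → Fin (d-2) → ℝ)
    (hw : ∀ k, 1 ≤ k → k ≤ 2^(d-2) → ∀ i, w k i = 1 ∨ w k i = -1)
    (hwinj : ∀ k l, 1 ≤ k → k ≤ 2^(d-2) → 1 ≤ l → l ≤ 2^(d-2) → w k = w l → k = l)
    (p : ℕ → EuclideanSpace ℝ (Fin d))
    (hp1 : p 1 = vec d 0 2 (fun _ => 0))
    (hp2 : p 2 = vec d (-1/4) (1/2) (fun _ => 0))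
    (hp3 : p 3 = vec d (21/20) (9/10) (fun _ => 0))
    (hpev : ∀ j, 2 ≤ j → j ≤ 2^(d-2)+1 → p (2*j) = vec d (-1) 0 (w (j-1)))
    (hpod : ∀ j, 2 ≤ j → j ≤ 2^(d-2)+1 → p (2*j+1) = vec d 1 0 (w (j-1)))
    (q2 q3 : EuclideanSpace ℝ (Fin d))
    (hq2 : q2 = vec d (-21/20) (9/10) (fun _ => 0))
    (hq3 : q3 = vec d (1/4) (1/2) (fun _ => 0)) :
    (midpoint ℝ (p 2) q2 ∈
        affineSpan ℝ ({p 1} ∪ {x | ∃ j, 2 ≤ j ∧ j ≤ 2^(d-2)+1 ∧ x = p (2*j)}) ∧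
      ∀ v ∈ (affineSpan ℝ
          ({p 1} ∪ {x | ∃ j, 2 ≤ j ∧ j ≤ 2^(d-2)+1 ∧ x = p (2*j)})).direction,
        ⟪p 2 - q2, v⟫ = 0) ∧
    (midpoint ℝ (p 3) q3 ∈
        affineSpan ℝ ({p 1} ∪ {x | ∃ j, 2 ≤ j ∧ j ≤ 2^(d-2)+1 ∧ x = p (2*j+1)}) ∧
      ∀ v ∈ (affineSpan ℝ
          ({p 1} ∪ {x | ∃ j, 2 ≤ j ∧ j ≤ 2^(d-2)+1 ∧ x = p (2*j+1)})).direction,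
        ⟪p 3 - q3, v⟫ = 0) := by
  have hz : ∑ j ∈ Icc 2 (2 ^ (d - 2) + 1), w (j - 1) = 0 := by
    refine sum_eq_zero_of_injOn_signs (fun j hj => ?_) (fun j hj k hk hjk => ?_) (by simp)
    · have := mem_Icc.1 hj
      exact hw _ (by omega) (by omega)
    · simp only [coe_Icc, Set.mem_Icc] at hj hk
      have := hwinj _ _ (by omega) (by omega) (by omega) (by omega) hjk
      omega
  have hn : 2 ^ (d - 2) ≠ 0 := by positivity
  have hp1' : p 1 = vec d 0 2 0 := hp1
  rw [hp1']
  refine ⟨⟨?_, fun v hv => ?_⟩, ⟨?_, fun v hv => ?_⟩⟩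
  · convert vec_mem_affineSpan_of_sum_eq_zero (Q := fun j => p (2 * j)) hn hpev hz using 1
    rw [hp2, hq2, midpoint_eq_smul_add, vec_add, vec_smul]
    congr 1 <;> norm_num [← Pi.zero_def]
  · have hpq : p 2 - q2 = (-2 / 5 : ℝ) • vec d (2 * -1) 1 0 := by
      rw [hp2, hq2, vec_sub, vec_smul]
      congr 1 <;> norm_num
    rw [hpq, inner_smul_left,
      inner_vec_eq_zero_of_mem_direction_affineSpan hd (by norm_num) hpev hv, mul_zero]
  · convert vec_mem_affineSpan_of_sum_eq_zero (Q := fun j => p (2 * j + 1)) hn hpod hz using 1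
    rw [hp3, hq3, midpoint_eq_smul_add, vec_add, vec_smul]
    congr 1 <;> norm_num [← Pi.zero_def]
  · have hpq : p 3 - q3 = (2 / 5 : ℝ) • vec d (2 * 1) 1 0 := by
      rw [hp3, hq3, vec_sub, vec_smul]
      congr 1 <;> norm_num
    rw [hpq, inner_smul_left,
      inner_vec_eq_zero_of_mem_direction_affineSpan hd (by norm_num) hpod hv, mul_zero]
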